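/- arXiv:0812.2306 — 2 statements merged into one kernel-verified Lean document; each statement's English description precedes it below -/
import Mathlib

section
/- In the field ℚ(q, z_1,…,z_l, w_1,…,w_l, u_1,…,u_l) the following convolution identity holds for every m ∈ ℕ^l: X_m(z,w) = ∑_{0 ≤ a ≤ m} X_{m−a}(u·q^{Ca}, w) · X_a(z, u^{−1}·q^{−Ca+2}), where u·q^{Ca} denotes substituting u_i q^{(Ca)_i} for the first group of variables of X_{m−a}, u^{−1}·q^{−Ca+2} denotes substituting u_i^{−1} q^{−(Ca)_i+2} for the second group of variables of X_a, and (Ca)_i = ∑_j C_{ij} a_j. (In the notation of the paper this is the identity X^{λ_1,λ_2}_β = ∑_α X^{μ−α,λ_2}_{β−α} X^{λ_1, α−μ−2ρ}_α for arbitrary weights λ_1, λ_2, μ.) -/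
noncomputable section

open scoped BigOperators

/-- The field ℚ(q, z_1,…,z_l, w_1,…,w_l, u_1,…,u_l). -/
abbrev F14 (l : ℕ) : Type :=
  FractionRing (MvPolynomial (Option (Fin l ⊕ Fin l ⊕ Fin l)) ℚ)

/-- the variable q -/
def q14 (l : ℕ) : F14 l :=
  algebraMap (MvPolynomial (Option (Fin l ⊕ Fin l ⊕ Fin l)) ℚ) (F14 l)
    (MvPolynomial.X none)

/-- the variables z_i -/
def z14 (l : ℕ) (i : Fin l) : F14 l :=
  algebraMap (MvPolynomial (Option (Fin l ⊕ Fin l ⊕ Fin l)) ℚ) (F14 l)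
    (MvPolynomial.X (some (Sum.inl i)))

/-- the variables w_i -/
def w14 (l : ℕ) (i : Fin l) : F14 l :=
  algebraMap (MvPolynomial (Option (Fin l ⊕ Fin l ⊕ Fin l)) ℚ) (F14 l)
    (MvPolynomial.X (some (Sum.inr (Sum.inl i))))

/-- the variables u_i -/
def u14 (l : ℕ) (i : Fin l) : F14 l :=
  algebraMap (MvPolynomial (Option (Fin l ⊕ Fin l ⊕ Fin l)) ℚ) (F14 l)
    (MvPolynomial.X (some (Sum.inr (Sum.inr i))))

/-- `W(a) = (1/2)∑ C_{ij} a_i a_j − ∑ a_i`  (the double sum is even, so integer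
division by 2 gives the exact value). -/
def W14 {l : ℕ} (C : Matrix (Fin l) (Fin l) ℤ) (a : Fin l → ℕ) : ℤ :=
  (∑ i, ∑ j, C i j * a i * a j) / 2 - ∑ i, (a i : ℤ)

/-- `(Ca)_i = ∑_j C_{ij} a_j` -/
def Cv {l : ℕ} (C : Matrix (Fin l) (Fin l) ℤ) (a : Fin l → ℕ) (i : Fin l) : ℤ :=
  ∑ j, C i j * a j

/-- `(q)_n = ∏_{k=1}^n (1 − q^k)` -/
def qP {F : Type} [Field F] (q : F) (n : ℕ) : F :=
  ∏ k ∈ Finset.range n, (1 - q ^ (k + 1))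

/-- `J` is the family satisfying `J 0 = 1` and the fermionic recursion with
variables `q`, `z` (simply-laced case). -/
def IsFermC {l : ℕ} (C : Matrix (Fin l) (Fin l) ℤ)
    {F : Type} [Field F] (q : F) (z : Fin l → F) (J : (Fin l → ℕ) → F) : Prop :=
  J 0 = 1 ∧ ∀ m : Fin l → ℕ, J m = ∑ a ∈ Finset.Iic m,
    (∏ i, z i ^ a i) * q ^ (W14 C a) *
      (∏ i, qP q (m i - a i))⁻¹ * J a

/-!
Write `x_a = u q^{Ca}`, `y_a = u⁻¹ q^{2 - Ca}`, and let `P_a`, `Q_a` be the fermionic families in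
these variables. Since `(x_d)_i (y_{d+k})_i = q^{2 - (Ck)_i}`, the quadratic form `W` satisfies
`x_d^{k-c} q^{W(k-c)} = x_d^k q^{W(k)} · y_{d+k}^c q^{W(c)}`. Expanding both recursions in
`S = ∑_c Q_{d+k}(c) y_{d+k}^c q^{W(c)} P_d(k-c)` therefore gives `S = x_d^k q^{W(k)} S`, and the
monomial `u^k q^N` is not `1` for `k ≠ 0`, so the arrays `P` and `Q` are inverse to each other.
A one-sided inverse of a unitriangular array is two-sided, and the identity is the resulting
associativity of convolution; it holds for arbitrary families in place of `J(z)` and `J(w)`.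
-/

open Finset

section Lattice

variable {ι : Type*} [Fintype ι] [DecidableEq ι]

theorem sum_Iic_tsub {M : Type*} [AddCommMonoid M] (k : ι → ℕ) (f : (ι → ℕ) → M) :
    ∑ c ∈ Iic k, f (k - c) = ∑ c ∈ Iic k, f c := by
  refine sum_nbij' (k - ·) (k - ·) (fun c _ => by simp) (fun c _ => by simp)
    (fun c hc => tsub_tsub_cancel_of_le (mem_Iic.1 hc))
    (fun c hc => tsub_tsub_cancel_of_le (mem_Iic.1 hc)) (fun c _ => rfl)

theorem sum_Iic_sum_Iic_tsub_comm {M : Type*} [AddCommMonoid M] (m : ι → ℕ)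
    (f : (ι → ℕ) → (ι → ℕ) → M) :
    ∑ c ∈ Iic m, ∑ e ∈ Iic (m - c), f c e =
      ∑ e ∈ Iic m, ∑ c ∈ Iic (m - e), f c e := by
  refine sum_comm' fun c e => ?_
  simp only [mem_Iic]
  constructor
  · rintro ⟨hc, he⟩
    have := (le_tsub_iff_left hc).1 he
    exact ⟨(le_tsub_iff_right (le_trans le_add_self this)).2 this, le_trans le_add_self this⟩
  · rintro ⟨hc, he⟩
    have := (le_tsub_iff_right he).1 hc
    exact ⟨le_trans le_self_add this, (le_tsub_iff_left (le_trans le_self_add this)).2 this⟩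

theorem eq_zero_of_sum_Iic_mul_tsub_eq_zero {R : Type*} [Semiring R]
    (A : (ι → ℕ) → (ι → ℕ) → R) (hA : ∀ n, A n 0 = 1) (f : (ι → ℕ) → R)
    (h : ∀ n, ∑ c ∈ Iic n, A n c * f (n - c) = 0) : f = 0 := by
  funext n
  induction n using WellFoundedLT.induction with
  | _ n ih =>
    have hn := h n
    rw [← add_sum_erase _ _ (mem_Iic.2 (zero_le (a := n))), sum_eq_zero, hA, tsub_zero, one_mul,
      add_zero] at hn
    · exact hn
    intro c hc
    obtain ⟨hc0, hcn⟩ := mem_erase.1 hc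
    have hlt : n - c < n := tsub_le_self.lt_of_ne fun h =>
      hc0 (left_eq_add.1 ((tsub_eq_iff_eq_add_of_le (mem_Iic.1 hcn)).1 h))
    rw [ih (n - c) hlt, Pi.zero_apply, mul_zero]

section Inverse

variable {R : Type*} [CommRing R] {A B : (ι → ℕ) → (ι → ℕ) → R}

theorem sum_Iic_mul_sum_Iic_eq_self_of_inverse (hA : ∀ n, A n 0 = 1)
    (hAB : ∀ d k, ∑ c ∈ Iic k, A (d + k) c * B d (k - c) = if k = 0 then 1 else 0)
    (ζ : (ι → ℕ) → R) (n : ι → ℕ) :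
    ∑ a ∈ Iic n, B a (n - a) * ∑ b ∈ Iic a, ζ (a - b) * A a b = ζ n := by
  set ξ : (ι → ℕ) → R := fun a => ∑ b ∈ Iic a, ζ (a - b) * A a b
  have hξ : ∀ m,
      ∑ c ∈ Iic m, A m c * ∑ a ∈ Iic (m - c), B a (m - c - a) * ξ a = ξ m := by
    intro m
    calc ∑ c ∈ Iic m, A m c * ∑ a ∈ Iic (m - c), B a (m - c - a) * ξ a
        = ∑ a ∈ Iic m, (∑ c ∈ Iic (m - a), A (a + (m - a)) c * B a (m - a - c)) * ξ a := by
          simp_rw [mul_sum, sum_mul]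
          rw [sum_Iic_sum_Iic_tsub_comm]
          refine sum_congr rfl fun a ha => sum_congr rfl fun c _ => ?_
          rw [add_tsub_cancel_of_le (mem_Iic.1 ha), tsub_right_comm, mul_assoc]
      _ = ξ m := by
          simp_rw [hAB, ite_mul, one_mul, zero_mul]
          rw [sum_eq_single_of_mem m (mem_Iic.2 le_rfl), tsub_self, if_pos rfl]
          exact fun a ha hne => if_neg fun h =>
            hne (le_antisymm (mem_Iic.1 ha) (tsub_eq_zero_iff_le.1 h))
  have hzero := eq_zero_of_sum_Iic_mul_tsub_eq_zero A hA
    (fun n => ∑ a ∈ Iic n, B a (n - a) * ξ a - ζ n) fun n => by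
      simp only [mul_sub, sum_sub_distrib, hξ]
      exact sub_eq_zero.2 (sum_congr rfl fun c _ => mul_comm _ _)
  exact sub_eq_zero.1 (congrFun hzero n)

theorem sum_Iic_convolution_eq_of_inverse (hA : ∀ n, A n 0 = 1)
    (hAB : ∀ d k, ∑ c ∈ Iic k, A (d + k) c * B d (k - c) = if k = 0 then 1 else 0)
    (ζ ω : (ι → ℕ) → R) (m : ι → ℕ) :
    ∑ a ∈ Iic m, ζ (m - a) * ω a =
      ∑ a ∈ Iic m, (∑ b ∈ Iic (m - a), B a (m - a - b) * ω b) *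
        ∑ b ∈ Iic a, ζ (a - b) * A a b := by
  calc ∑ a ∈ Iic m, ζ (m - a) * ω a
      = ∑ b ∈ Iic m, ∑ a ∈ Iic (m - b),
          B a (m - b - a) * (∑ c ∈ Iic a, ζ (a - c) * A a c) * ω b := by
        refine sum_congr rfl fun b _ => ?_
        rw [← sum_Iic_mul_sum_Iic_eq_self_of_inverse hA hAB ζ (m - b), sum_mul]
    _ = _ := by
        rw [sum_Iic_sum_Iic_tsub_comm]
        refine sum_congr rfl fun a _ => ?_
        rw [sum_mul]
        refine sum_congr rfl fun b _ => ?_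
        rw [tsub_right_comm]
        ring

end Inverse

end Lattice

section CartanMatrix

variable {l : ℕ} {C : Matrix (Fin l) (Fin l) ℤ}

theorem even_sum_sum_mul_mul (hsym : C.IsSymm) (hdiag : ∀ i, C i i = 2) (x : Fin l → ℤ) :
    Even (∑ i, ∑ j, C i j * x i * x j) := by
  set U : Fin l → Fin l → ℤ := fun i j => if i < j then C i j * x i * x j else 0
  have hsplit : ∀ i j,
      C i j * x i * x j = U i j + U j i + if i = j then 2 * (x i * x i) else 0 := by
    intro i j
    rcases lt_trichotomy i j with h | rfl | h
    · simp [U, h, h.ne, h.not_gt]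
    · simp [U, hdiag]; ring
    · simp [U, h, h.ne', h.not_gt, hsym.apply i j]; ring
  refine ⟨∑ i, ∑ j, U i j + ∑ i, x i * x i, ?_⟩
  simp_rw [hsplit, sum_add_distrib, sum_ite_eq, mem_univ, if_true, ← mul_sum]
  rw [sum_comm (f := fun i j => U j i)]
  ring

theorem Cv_add (a b : Fin l → ℕ) (i : Fin l) : Cv C (a + b) i = Cv C a i + Cv C b i := by
  simp [Cv, mul_add, sum_add_distrib]

theorem W14_zero : W14 C 0 = 0 := by
  simp [W14]

theorem W14_tsub (hsym : C.IsSymm) (hdiag : ∀ i, C i i = 2) {c k : Fin l → ℕ} (h : c ≤ k) :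
    W14 C (k - c) = W14 C k + W14 C c + ∑ i, (2 - Cv C k i) * c i := by
  have hcast : ∀ i, (((k - c) i : ℕ) : ℤ) = k i - c i := fun i => Nat.cast_sub (h i)
  have hquad : ∑ i, ∑ j, C i j * ((k - c) i : ℕ) * ((k - c) j : ℕ) =
      ∑ i, ∑ j, C i j * k i * k j + ∑ i, ∑ j, C i j * c i * c j -
        2 * ∑ i, Cv C k i * c i := by
    have hpt : ∀ i j, C i j * ((k - c) i : ℕ) * ((k - c) j : ℕ) = C i j * k i * k j +
        C i j * c i * c j - C i j * k j * c i - C j i * k i * c j := by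
      intro i j
      rw [hcast, hcast, hsym.apply]
      ring
    simp_rw [hpt, sum_sub_distrib, sum_add_distrib]
    rw [sum_comm (f := fun i j => C j i * k i * c j)]
    simp only [Cv, sum_mul]
    ring
  obtain ⟨s, hs⟩ := even_sum_sum_mul_mul hsym hdiag (fun i => k i)
  obtain ⟨t, ht⟩ := even_sum_sum_mul_mul hsym hdiag (fun i => c i)
  rw [W14, W14, W14, hquad, hs, ht]
  simp only [hcast, sum_sub_distrib, sub_mul, ← mul_sum]
  omega

end CartanMatrix

theorem Finset.prod_zpow_pow {ι G₀ : Type*} [CommGroupWithZero G₀] {a : G₀} (ha : a ≠ 0)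
    (s : Finset ι) (f : ι → ℤ) (n : ι → ℕ) :
    ∏ i ∈ s, (a ^ f i) ^ n i = a ^ ∑ i ∈ s, f i * n i := by
  induction s using Finset.cons_induction with
  | empty => simp
  | cons i s hi ih => rw [prod_cons, sum_cons, ih, zpow_add₀ ha, zpow_mul, zpow_natCast]

section Fermionic

variable {l : ℕ} {C : Matrix (Fin l) (Fin l) ℤ} {F : Type} [Field F] {q : F}

def fermMonomial (C : Matrix (Fin l) (Fin l) ℤ) (q : F) (x : Fin l → F) (a : Fin l → ℕ) :
    F :=
  q ^ W14 C a * ∏ i, x i ^ a i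

theorem fermMonomial_zero (x : Fin l → F) : fermMonomial C q x 0 = 1 := by
  simp [fermMonomial, W14_zero]

theorem fermMonomial_tsub (hsym : C.IsSymm) (hdiag : ∀ i, C i i = 2) (hq : q ≠ 0)
    {x y : Fin l → F} (hx : ∀ i, x i ≠ 0) {c k : Fin l → ℕ}
    (hxy : ∀ i, x i * y i = q ^ (2 - Cv C k i)) (h : c ≤ k) :
    fermMonomial C q x (k - c) = fermMonomial C q x k * fermMonomial C q y c := by
  have hxc : ∏ i, x i ^ c i ≠ 0 := prod_ne_zero_iff.2 fun i _ => pow_ne_zero _ (hx i)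
  have hxk : ∏ i, x i ^ (k - c) i = (∏ i, x i ^ k i) / ∏ i, x i ^ c i := by
    rw [← prod_div_distrib]
    exact prod_congr rfl fun i _ => by rw [div_eq_mul_inv, ← pow_sub₀ _ (hx i) (h i)]; rfl
  have hxyc : (∏ i, x i ^ c i) * ∏ i, y i ^ c i = q ^ ∑ i, (2 - Cv C k i) * c i := by
    rw [← prod_mul_distrib, ← prod_zpow_pow hq]
    exact prod_congr rfl fun i _ => by rw [← mul_pow, hxy]
  rw [fermMonomial, fermMonomial, fermMonomial, W14_tsub hsym hdiag h, zpow_add₀ hq,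
    zpow_add₀ hq, ← hxyc, hxk]
  field_simp

theorem sum_Iic_mul_fermMonomial_mul_tsub {x : Fin l → F} {J : (Fin l → ℕ) → F}
    (hJ : IsFermC C q x J) (G : (Fin l → ℕ) → F) (k : Fin l → ℕ) :
    ∑ c ∈ Iic k, G c * J (k - c) = ∑ c ∈ Iic k, ∑ e ∈ Iic (k - c),
      G c * (J e * fermMonomial C q x e) * (∏ i, qP q ((k - c - e) i))⁻¹ := by
  refine sum_congr rfl fun c _ => ?_
  rw [hJ.2, mul_sum]
  refine sum_congr rfl fun e _ => ?_
  simp only [fermMonomial, Pi.sub_apply]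
  ring

theorem sum_Iic_fermionic_mul_fermionic_comm {x y : Fin l → F} {P Q : (Fin l → ℕ) → F}
    (hP : IsFermC C q x P) (hQ : IsFermC C q y Q) (k : Fin l → ℕ) :
    ∑ c ∈ Iic k, Q c * fermMonomial C q y c * P (k - c) =
      ∑ c ∈ Iic k, P c * fermMonomial C q x c * Q (k - c) := by
  rw [sum_Iic_mul_fermMonomial_mul_tsub hP, sum_Iic_mul_fermMonomial_mul_tsub hQ,
    sum_Iic_sum_Iic_tsub_comm]
  refine sum_congr rfl fun e _ => sum_congr rfl fun c _ => ?_
  rw [tsub_right_comm]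
  ring

theorem sum_Iic_fermionic_mul_fermionic (hsym : C.IsSymm) (hdiag : ∀ i, C i i = 2)
    (hq : q ≠ 0) {x y : Fin l → F} (hx : ∀ i, x i ≠ 0) {k : Fin l → ℕ}
    (hxy : ∀ i, x i * y i = q ^ (2 - Cv C k i)) (hk : k ≠ 0 → fermMonomial C q x k ≠ 1)
    {P Q : (Fin l → ℕ) → F} (hP : IsFermC C q x P) (hQ : IsFermC C q y Q) :
    ∑ c ∈ Iic k, Q c * fermMonomial C q y c * P (k - c) = if k = 0 then 1 else 0 := by
  split_ifs with hk0
  · subst hk0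
    rw [show Iic (0 : Fin l → ℕ) = {0} from Iic_bot, sum_singleton, tsub_zero, hP.1, hQ.1,
      fermMonomial_zero, mul_one, mul_one]
  have hS : fermMonomial C q x k * ∑ c ∈ Iic k, Q c * fermMonomial C q y c * P (k - c) =
      1 * ∑ c ∈ Iic k, Q c * fermMonomial C q y c * P (k - c) := by
    conv_rhs => rw [one_mul, sum_Iic_fermionic_mul_fermionic_comm hP hQ, ← sum_Iic_tsub]
    rw [mul_sum]
    refine sum_congr rfl fun c hc => ?_
    rw [tsub_tsub_cancel_of_le (mem_Iic.1 hc),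
      fermMonomial_tsub hsym hdiag hq hx hxy (mem_Iic.1 hc)]
    ring
  by_contra hS0
  exact hk hk0 (mul_right_cancel₀ hS0 hS)

theorem sum_Iic_fermionic_dual_mul_fermionic (hsym : C.IsSymm) (hdiag : ∀ i, C i i = 2)
    (hq : q ≠ 0) {u : Fin l → F} (hu : ∀ i, u i ≠ 0)
    (hindep : ∀ k : Fin l → ℕ, k ≠ 0 → ∀ N : ℤ, (∏ i, u i ^ k i) * q ^ N ≠ 1)
    {P Q : (Fin l → ℕ) → (Fin l → ℕ) → F}
    (hP : ∀ a, IsFermC C q (fun i => u i * q ^ Cv C a i) (P a))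
    (hQ : ∀ a, IsFermC C q (fun i => (u i)⁻¹ * q ^ (-(Cv C a i) + 2)) (Q a))
    (d k : Fin l → ℕ) :
    ∑ c ∈ Iic k, Q (d + k) c *
        fermMonomial C q (fun i => (u i)⁻¹ * q ^ (-(Cv C (d + k) i) + 2)) c * P d (k - c) =
      if k = 0 then 1 else 0 := by
  refine sum_Iic_fermionic_mul_fermionic hsym hdiag hq
    (fun i => mul_ne_zero (hu i) (zpow_ne_zero _ hq)) (fun i => ?_) (fun hk => ?_) (hP d) (hQ _)
  · rw [mul_mul_mul_comm, mul_inv_cancel₀ (hu i), one_mul, ← zpow_add₀ hq, Cv_add]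
    ring_nf
  · rw [fermMonomial, prod_congr rfl fun i _ => mul_pow (u i) _ (k i), prod_mul_distrib,
      mul_left_comm, prod_zpow_pow hq, ← zpow_add₀ hq]
    exact hindep k hk _

end Fermionic

theorem q14_ne_zero (l : ℕ) : q14 l ≠ 0 :=
  (map_ne_zero_iff _ (IsFractionRing.injective _ _)).2 (MvPolynomial.X_ne_zero _)

theorem u14_ne_zero (l : ℕ) (i : Fin l) : u14 l i ≠ 0 :=
  (map_ne_zero_iff _ (IsFractionRing.injective _ _)).2 (MvPolynomial.X_ne_zero _)

theorem prod_u14_pow_mul_zpow_ne_one {l : ℕ} {k : Fin l → ℕ} (hk : k ≠ 0) (N : ℤ) :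
    (∏ i, u14 l i ^ k i) * q14 l ^ N ≠ 1 := by
  intro h
  obtain ⟨a, b, rfl⟩ : ∃ a b : ℕ, N = a - b :=
    ⟨N.toNat, (-N).toNat, (Int.toNat_sub_toNat_neg N).symm⟩
  rw [zpow_sub₀ (q14_ne_zero l), zpow_natCast, zpow_natCast, ← mul_div_assoc,
    div_eq_one_iff_eq (pow_ne_zero _ (q14_ne_zero l))] at h
  have hpoly :=
    IsFractionRing.injective (MvPolynomial (Option (Fin l ⊕ Fin l ⊕ Fin l)) ℚ) (F14 l)
    (a₁ := (∏ i, .X (some (.inr (.inr i))) ^ k i) * .X none ^ a) (a₂ := .X none ^ b)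
    (by simpa [map_prod, u14, q14] using h)
  -- evaluate at `u_i = 2` and all other variables `1`
  have h2 := congrArg (MvPolynomial.eval fun v =>
    v.elim 1 (Sum.elim (fun _ => 1) (Sum.elim (fun _ => 1) fun _ => (2 : ℚ)))) hpoly
  norm_num [prod_pow_eq_pow_sum, pow_eq_one_iff_cases] at h2
  exact hk (funext h2)

theorem stmt_14_general (l : ℕ) (C : Matrix (Fin l) (Fin l) ℤ)
    (hsym : C.IsSymm) (hdiag : ∀ i, C i i = 2)
    -- J in the variables z, respectively w
    (Jz Jw : (Fin l → ℕ) → F14 l)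
    -- for each a, J in the substituted variables u_i⁻¹ q^{−(Ca)_i+2}
    (JA : (Fin l → ℕ) → (Fin l → ℕ) → F14 l)
    (hJA : ∀ a, IsFermC C (q14 l)
      (fun i => (u14 l i)⁻¹ * q14 l ^ (-(Cv C a i) + 2)) (JA a))
    -- for each a, J in the substituted variables u_i q^{(Ca)_i}
    (JU : (Fin l → ℕ) → (Fin l → ℕ) → F14 l)
    (hJU : ∀ a, IsFermC C (q14 l)
      (fun i => u14 l i * q14 l ^ (Cv C a i)) (JU a)) :
    ∀ m : Fin l → ℕ,
      ∑ a ∈ Finset.Iic m,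
        Jz (m - a) * Jw a * q14 l ^ (W14 C a) * ∏ i, w14 l i ^ a i
      = ∑ a ∈ Finset.Iic m,
          (∑ b ∈ Finset.Iic (m - a),
            JU a (m - a - b) * Jw b * q14 l ^ (W14 C b) * ∏ i, w14 l i ^ b i) *
          (∑ b ∈ Finset.Iic a,
            Jz (a - b) * JA a b * q14 l ^ (W14 C b) *
              ∏ i, ((u14 l i)⁻¹ * q14 l ^ (-(Cv C a i) + 2)) ^ b i) := by
  intro m
  have hinv := sum_Iic_fermionic_dual_mul_fermionic hsym hdiag (q14_ne_zero l) (u14_ne_zero l)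
    (fun _ hk => prod_u14_pow_mul_zpow_ne_one hk) hJU hJA
  have hconv := sum_Iic_convolution_eq_of_inverse
    (A := fun a b => JA a b *
      fermMonomial C (q14 l) (fun i => (u14 l i)⁻¹ * q14 l ^ (-(Cv C a i) + 2)) b)
    (fun a => by rw [(hJA a).1, fermMonomial_zero, one_mul]) hinv
    Jz (fun b => Jw b * fermMonomial C (q14 l) (w14 l) b) m
  simpa only [fermMonomial, mul_assoc] using hconv

theorem stmt_14 (l : ℕ) (hl : 1 ≤ l) (C : Matrix (Fin l) (Fin l) ℤ)
    (hsym : C.IsSymm) (hdiag : ∀ i, C i i = 2)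
    (hoff : ∀ i j, i ≠ j → C i j = 0 ∨ C i j = -1)
    (hposdef : ∀ x : Fin l → ℤ, x ≠ 0 → 0 < ∑ i, ∑ j, C i j * x i * x j)
    -- J in the variables z, respectively w
    (Jz Jw : (Fin l → ℕ) → F14 l)
    (hJz : IsFermC C (q14 l) (z14 l) Jz)
    (hJw : IsFermC C (q14 l) (w14 l) Jw)
    -- for each a, J in the substituted variables u_i⁻¹ q^{−(Ca)_i+2}
    (JA : (Fin l → ℕ) → (Fin l → ℕ) → F14 l)
    (hJA : ∀ a, IsFermC C (q14 l)
      (fun i => (u14 l i)⁻¹ * q14 l ^ (-(Cv C a i) + 2)) (JA a))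
    -- for each a, J in the substituted variables u_i q^{(Ca)_i}
    (JU : (Fin l → ℕ) → (Fin l → ℕ) → F14 l)
    (hJU : ∀ a, IsFermC C (q14 l)
      (fun i => u14 l i * q14 l ^ (Cv C a i)) (JU a)) :
    ∀ m : Fin l → ℕ,
      ∑ a ∈ Finset.Iic m,
        Jz (m - a) * Jw a * q14 l ^ (W14 C a) * ∏ i, w14 l i ^ a i
      = ∑ a ∈ Finset.Iic m,
          (∑ b ∈ Finset.Iic (m - a),
            JU a (m - a - b) * Jw b * q14 l ^ (W14 C b) * ∏ i, w14 l i ^ b i) *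
          (∑ b ∈ Finset.Iic a,
            Jz (a - b) * JA a b * q14 l ^ (W14 C b) *
              ∏ i, ((u14 l i)⁻¹ * q14 l ^ (-(Cv C a i) + 2)) ^ b i) :=
  stmt_14_general l C hsym hdiag Jz Jw JA hJA JU hJU

end
end

section
/- For every m ∈ ℕ^l the following identity holds in F = ℚ(q, z_1,…,z_l): ∑_{0 ≤ a ≤ m} (z^a q^{W(a)})^{−1} · J_a(z^{−1}·q^{−Ba+2d}) · J_{m−a}(z·q^{Ba}) = δ_{m,0}, where J_a(z^{−1}·q^{−Ba+2d}) denotes the image of J_a under the substitution z_i ↦ z_i^{−1} q^{−(Ba)_i + 2d_i}, J_{m−a}(z·q^{Ba}) the image of J_{m−a} under z_i ↦ z_i q^{(Ba)_i}, (Ba)_i = ∑_j B_{ij} a_j, and δ_{m,0} equals 1 if m = 0 and 0 otherwise. (In the notation of the paper: ∑_{α ∈ Q_+} J^{α−λ−2ρ}_α J^{λ−α}_{β−α} q^{−(α,α)/2 + (λ+ρ,α)} = δ_{β,0} for any simple Lie algebra.) -/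
/- STATEMENT 15: in F = ℚ(q,z_1,…,z_l), for the symmetrized Cartan matrix B:
     ∑_{0≤a≤m} (z^a q^{W(a)})⁻¹ · J_a(z⁻¹·q^{−Ba+2d}) · J_{m−a}(z·q^{Ba}) = δ_{m,0},
   where the substituted J's are the (unique) solutions of the fermionic
   recursion in the substituted variables. -/

noncomputable section

open scoped BigOperators

/-- The field ℚ(q, z_1, …, z_l). -/
abbrev F15 (l : ℕ) : Type := FractionRing (MvPolynomial (Fin (l + 1)) ℚ)

/-- the variable q -/
def q15 (l : ℕ) : F15 l :=
  algebraMap (MvPolynomial (Fin (l + 1)) ℚ) (F15 l) (MvPolynomial.X 0)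

/-- the variables z_i -/
def z15 (l : ℕ) (i : Fin l) : F15 l :=
  algebraMap (MvPolynomial (Fin (l + 1)) ℚ) (F15 l) (MvPolynomial.X i.succ)

/-- `W(a) = (1/2)∑ B_{ij} a_i a_j − ∑ d_i a_i`  (the double sum is even, so
integer division by 2 gives the exact value). -/
def W15 {l : ℕ} (B : Matrix (Fin l) (Fin l) ℤ) (d : Fin l → ℕ) (a : Fin l → ℕ) : ℤ :=
  (∑ i, ∑ j, B i j * a i * a j) / 2 - ∑ i, (d i : ℤ) * a i

/-- `(Ba)_i = ∑_j B_{ij} a_j` -/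
def Bv {l : ℕ} (B : Matrix (Fin l) (Fin l) ℤ) (a : Fin l → ℕ) (i : Fin l) : ℤ :=
  ∑ j, B i j * a j

/-- `(Q;Q)_n = ∏_{k=1}^n (1 − Q^k)` -/
def pochQ {F : Type} [Field F] (Q : F) (n : ℕ) : F :=
  ∏ k ∈ Finset.range n, (1 - Q ^ (k + 1))

/-- `J` is the family satisfying `J 0 = 1` and the fermionic recursion with
variables `q`, `z`. -/
def IsFerm {l : ℕ} (B : Matrix (Fin l) (Fin l) ℤ) (d : Fin l → ℕ)
    {F : Type} [Field F] (q : F) (z : Fin l → F) (J : (Fin l → ℕ) → F) : Prop :=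
  J 0 = 1 ∧ ∀ m : Fin l → ℕ, J m = ∑ a ∈ Finset.Iic m,
    (∏ i, z i ^ a i) * q ^ (W15 B d a) *
      (∏ i, pochQ (q ^ d i) (m i - a i))⁻¹ * J a

/-!
Write `S_c(m) = ∑_{a ≤ m} (z^a q^{(a,Bc) + W(a)})⁻¹ J⁻_{a+c}(a) J⁺_{a+c}(m-a)`, where `J⁻_v`, `J⁺_v`
are the fermionic families in the variables `z⁻¹ q^{-Bv+2d}` and `z q^{Bv}`; the theorem is
`S_0(m) = δ_{m,0}`, and we prove `S_c(m) = δ_{m,0}` for every shift `c` by induction on `m`.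
The plain convolution `∑_{a ≤ m} J⁻_{a+c}(a) J⁺_{a+c}(m-a)` can be expanded in two ways, since
`W(a+b) = W(a) + W(b) + (a,Bb)` lets the recursion coefficients of `J⁺_{a+c}` and `J⁻_{a+c}` be
absorbed into those of `S`: expanding `J⁺` gives `∑_{e ≤ m} z^e q^{(e,Bc)+W(e)} S_c(e) / (q;q)_{m-e}`,
expanding `J⁻` gives `∑_{g ≤ m} S_{c+g}(m-g) / (q;q)_g`. By induction only the terms with
`e, g ∈ {0, m}` survive, which leaves `(z^m q^{(m,Bc)+W(m)} - 1) S_c(m) = 0`; the monomial is not `1`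
because `z_1, …, z_l, q` are algebraically independent.
-/

open Finset

theorem zpow_sum₀ {ι G₀ : Type*} [CommGroupWithZero G₀] {a : G₀} (ha : a ≠ 0) (s : Finset ι)
    (f : ι → ℤ) : a ^ (∑ i ∈ s, f i) = ∏ i ∈ s, a ^ f i := by
  classical
  induction s using Finset.induction_on with
  | empty => simp
  | insert i s hi ih => rw [sum_insert hi, prod_insert hi, zpow_add₀ ha, ih]

theorem two_dvd_sum_mul_mul_of_isSymm : ∀ {n : ℕ} (B : Matrix (Fin n) (Fin n) ℤ), B.IsSymm →
    (∀ i, 2 ∣ B i i) → ∀ x : Fin n → ℤ, 2 ∣ ∑ i, ∑ j, B i j * x i * x j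
  | 0, _, _, _, _ => by simp
  | n + 1, B, hB, hdiag, x => by
    have ih := two_dvd_sum_mul_mul_of_isSymm (B.submatrix Fin.succ Fin.succ)
      (hB.submatrix _) (fun i => hdiag i.succ) (x ∘ Fin.succ)
    have cross :
        ∑ i : Fin n, B i.succ 0 * x i.succ * x 0 = ∑ j : Fin n, B 0 j.succ * x 0 * x j.succ :=
      sum_congr rfl fun i _ => by rw [hB.apply]; ring
    simp only [Fin.sum_univ_succ, sum_add_distrib, cross]
    simp only [Matrix.submatrix_apply, Function.comp_apply] at ih
    have h0 : 2 ∣ B 0 0 * x 0 * x 0 := (dvd_mul_of_dvd_left (hdiag 0) _).mul_right _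
    generalize B 0 0 * x 0 * x 0 = A at h0 ⊢
    generalize ∑ i : Fin n, ∑ j : Fin n, B i.succ j.succ * x i.succ * x j.succ = T at ih ⊢
    generalize ∑ j : Fin n, B 0 j.succ * x 0 * x j.succ = S
    omega

section Reindex

variable {α M : Type*} [AddCommMonoid α] [PartialOrder α] [CanonicallyOrderedAdd α] [Sub α]
  [OrderedSub α] [AddLeftReflectLE α]

theorem tsub_lt_self_of_le_of_ne_zero {a b : α} (hba : b ≤ a) (hb : b ≠ 0) : a - b < a :=
  lt_of_le_of_ne tsub_le_self fun h => hb <| by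
    have := tsub_add_cancel_of_le hba
    rwa [h, add_eq_left] at this

variable [LocallyFiniteOrderBot α] [AddCommMonoid M]

theorem Finset.sum_Iic_tsub_reflect (e : α) (f : α → M) :
    ∑ b ∈ Iic e, f (e - b) = ∑ b ∈ Iic e, f b := by
  refine sum_nbij' (e - ·) (e - ·) (fun b _ => by simp) (fun b _ => by simp) ?_ ?_ (fun _ _ => rfl)
    <;> intro b hb <;> exact tsub_tsub_cancel_of_le (mem_Iic.mp hb)

theorem Finset.sum_Iic_sum_Iic_tsub (m : α) (f : α → α → M) :
    ∑ a ∈ Iic m, ∑ b ∈ Iic (m - a), f a b = ∑ e ∈ Iic m, ∑ a ∈ Iic e, f a (e - a) := by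
  classical
  have inner (a : α) (ha : a ≤ m) :
      ∑ b ∈ Iic (m - a), f a b = ∑ e ∈ Iic m with a ≤ e, f a (e - a) := by
    refine sum_nbij' (a + ·) (· - a) (fun b hb => ?_) (fun e he => ?_) (fun b _ => ?_)
      (fun e he => ?_) (fun b _ => ?_)
    · simp only [mem_Iic, mem_filter, le_self_add, and_true] at hb ⊢
      exact (le_tsub_iff_left ha).mp hb
    · simp only [mem_Iic, mem_filter] at he ⊢
      exact tsub_le_tsub_right he.1 a
    · exact add_tsub_cancel_left a b
    · exact add_tsub_cancel_of_le (mem_filter.mp he).2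
    · simp only [add_tsub_cancel_left]
  rw [sum_congr rfl fun a ha => inner a (mem_Iic.mp ha)]
  refine sum_comm' fun a e => ?_
  simp only [mem_Iic, mem_filter]
  exact ⟨fun ⟨_, hem, hae⟩ => ⟨hae, hem⟩, fun ⟨hae, hem⟩ => ⟨hae.trans hem, hem, hae⟩⟩

theorem Finset.sum_Iic_sum_Iic (m : α) (f : α → α → M) :
    ∑ e ∈ Iic m, ∑ b ∈ Iic e, f e b = ∑ g ∈ Iic m, ∑ x ∈ Iic (m - g), f (g + x) x := by
  rw [sum_Iic_sum_Iic_tsub]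
  refine sum_congr rfl fun e _ => ?_
  rw [← sum_Iic_tsub_reflect e]
  exact sum_congr rfl fun g hg => by rw [add_tsub_cancel_of_le (mem_Iic.mp hg)]

end Reindex

namespace Fermionic

variable {l : ℕ} {B : Matrix (Fin l) (Fin l) ℤ} {d : Fin l → ℕ}

variable (B) in
def pairing (a b : Fin l → ℕ) : ℤ := ∑ i, ∑ j, B i j * a i * b j

theorem pairing_add_left (a b c : Fin l → ℕ) :
    pairing B (a + b) c = pairing B a c + pairing B b c := by
  simp only [pairing, Pi.add_apply, Nat.cast_add, mul_add, add_mul, sum_add_distrib]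

theorem pairing_add_right (a b c : Fin l → ℕ) :
    pairing B a (b + c) = pairing B a b + pairing B a c := by
  simp only [pairing, Pi.add_apply, Nat.cast_add, mul_add, sum_add_distrib]

theorem pairing_comm (hsym : B.IsSymm) (a b : Fin l → ℕ) : pairing B a b = pairing B b a := by
  rw [pairing, pairing, sum_comm]
  exact sum_congr rfl fun i _ => sum_congr rfl fun j _ => by rw [hsym.apply]; ring

theorem pairing_zero_right (a : Fin l → ℕ) : pairing B a 0 = 0 := by
  simp [pairing]

theorem sum_Bv_mul (a b : Fin l → ℕ) : ∑ i, Bv B a i * b i = pairing B b a := by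
  simp only [pairing, Bv, sum_mul]
  exact sum_congr rfl fun i _ => sum_congr rfl fun j _ => by ring

theorem Bv_add (a b : Fin l → ℕ) (i : Fin l) : Bv B (a + b) i = Bv B a i + Bv B b i := by
  simp only [Bv, Pi.add_apply, Nat.cast_add, mul_add, sum_add_distrib]

theorem two_mul_W15 (hsym : B.IsSymm) (hdiag : ∀ i, B i i = 2 * d i) (a : Fin l → ℕ) :
    2 * W15 B d a = pairing B a a - 2 * ∑ i, (d i : ℤ) * a i := by
  have := two_dvd_sum_mul_mul_of_isSymm B hsym (fun i => ⟨d i, hdiag i⟩) (fun i => (a i : ℤ))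
  rw [W15, pairing]
  omega

theorem W15_add (hsym : B.IsSymm) (hdiag : ∀ i, B i i = 2 * d i) (a b : Fin l → ℕ) :
    W15 B d (a + b) = W15 B d a + W15 B d b + pairing B a b := by
  have h := two_mul_W15 hsym hdiag
  have hsum : ∑ i, (d i : ℤ) * (a + b) i = ∑ i, (d i : ℤ) * a i + ∑ i, (d i : ℤ) * b i := by
    simp only [Pi.add_apply, Nat.cast_add, mul_add, sum_add_distrib]
  have := h (a + b)
  rw [pairing_add_left, pairing_add_right, pairing_add_right, pairing_comm hsym b a, hsum] at this
  linarith [h a, h b]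

theorem W15_zero : W15 B d 0 = 0 := by simp [W15]

variable {K : Type} [Field K] {q : K} {z : Fin l → K}

variable (B d q z) in
def shiftMono (c a : Fin l → ℕ) : K := (∏ i, z i ^ a i) * q ^ (pairing B a c + W15 B d a)

variable (d q) in
def pochProd (n : Fin l → ℕ) : K := ∏ i, pochQ (q ^ d i) (n i)

theorem pochProd_zero : pochProd d q 0 = 1 := by simp [pochProd, pochQ]

theorem shiftMono_zero (c : Fin l → ℕ) : shiftMono B d q z c 0 = 1 := by
  simp [shiftMono, pairing, W15_zero]

theorem shiftMono_ne_zero (hq : q ≠ 0) (hz : ∀ i, z i ≠ 0) (c a : Fin l → ℕ) :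
    shiftMono B d q z c a ≠ 0 :=
  mul_ne_zero (prod_ne_zero_iff.mpr fun i _ => pow_ne_zero _ (hz i)) (zpow_ne_zero _ hq)

theorem shiftMono_add (hq : q ≠ 0) (hsym : B.IsSymm) (hdiag : ∀ i, B i i = 2 * d i)
    (c a b : Fin l → ℕ) :
    shiftMono B d q z c (a + b) = shiftMono B d q z c a * shiftMono B d q z (c + a) b := by
  have hexp : pairing B (a + b) c + W15 B d (a + b)
      = (pairing B a c + W15 B d a) + (pairing B b (c + a) + W15 B d b) := by
    rw [pairing_add_left, pairing_add_right, W15_add hsym hdiag, pairing_comm hsym b a]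
    ring
  simp only [shiftMono, Pi.add_apply, pow_add, prod_mul_distrib, hexp, zpow_add₀ hq]
  ring

theorem prod_mul_zpow_pow (hq : q ≠ 0) (x : Fin l → K) (e : Fin l → ℤ) (b : Fin l → ℕ) :
    ∏ i, (x i * q ^ e i) ^ b i = (∏ i, x i ^ b i) * q ^ ∑ i, e i * b i := by
  simp only [mul_pow, prod_mul_distrib, zpow_sum₀ hq, zpow_mul, zpow_natCast]

theorem prod_pos_subst_pow_mul (hq : q ≠ 0) (v b : Fin l → ℕ) :
    (∏ i, (z i * q ^ Bv B v i) ^ b i) * q ^ W15 B d b = shiftMono B d q z v b := by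
  rw [prod_mul_zpow_pow hq, sum_Bv_mul, mul_assoc, ← zpow_add₀ hq, shiftMono]

theorem prod_neg_subst_pow_mul (hq : q ≠ 0) (hsym : B.IsSymm) (hdiag : ∀ i, B i i = 2 * d i)
    (u b : Fin l → ℕ) :
    (∏ i, ((z i)⁻¹ * q ^ (-Bv B (u + b) i + 2 * (d i : ℤ))) ^ b i) * q ^ W15 B d b
      = (shiftMono B d q z u b)⁻¹ := by
  have hexp : ∑ i, (-Bv B (u + b) i + 2 * (d i : ℤ)) * b i + W15 B d b
      = -(pairing B b u + W15 B d b) := by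
    have hsum : ∑ i, (-Bv B (u + b) i + 2 * (d i : ℤ)) * b i
        = -(∑ i, Bv B u i * b i) - ∑ i, Bv B b i * b i + 2 * ∑ i, (d i : ℤ) * b i := by
      simp only [Bv_add, neg_add, add_mul, neg_mul, sum_add_distrib, sum_neg_distrib, mul_sum,
        mul_assoc]
      ring
    rw [hsum, sum_Bv_mul, sum_Bv_mul]
    linarith [two_mul_W15 hsym hdiag b]
  rw [prod_mul_zpow_pow hq, mul_assoc, ← zpow_add₀ hq, hexp, zpow_neg, shiftMono, mul_inv]
  simp only [inv_pow, prod_inv_distrib]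

theorem eq_sum_shiftMono_of_isFerm (hq : q ≠ 0) {v : Fin l → ℕ} {J : (Fin l → ℕ) → K}
    (hJ : IsFerm B d q (fun i => z i * q ^ Bv B v i) J) (n : Fin l → ℕ) :
    J n = ∑ b ∈ Iic n, shiftMono B d q z v b * (pochProd d q (n - b))⁻¹ * J b := by
  rw [hJ.2 n]
  exact sum_congr rfl fun b _ => by rw [prod_pos_subst_pow_mul hq]; rfl

theorem eq_sum_inv_shiftMono_of_isFerm (hq : q ≠ 0) (hsym : B.IsSymm)
    (hdiag : ∀ i, B i i = 2 * d i) {v : Fin l → ℕ} {J : (Fin l → ℕ) → K}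
    (hJ : IsFerm B d q (fun i => (z i)⁻¹ * q ^ (-Bv B v i + 2 * (d i : ℤ))) J)
    {n : Fin l → ℕ} (hnv : n ≤ v) :
    J n = ∑ b ∈ Iic n, (shiftMono B d q z (v - b) b)⁻¹ * (pochProd d q (n - b))⁻¹ * J b := by
  rw [hJ.2 n]
  refine sum_congr rfl fun b hb => ?_
  have hv : v - b + b = v := tsub_add_cancel_of_le ((mem_Iic.mp hb).trans hnv)
  rw [← prod_neg_subst_pow_mul hq hsym hdiag (v - b) b, hv]
  rfl

variable (B d q z) in
def inversionSum (Jneg Jpos : (Fin l → ℕ) → (Fin l → ℕ) → K) (c m : Fin l → ℕ) : K :=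
  ∑ a ∈ Iic m, (shiftMono B d q z c a)⁻¹ * Jneg (a + c) a * Jpos (a + c) (m - a)

variable {Jneg Jpos : (Fin l → ℕ) → (Fin l → ℕ) → K}

theorem inversionSum_zero (hJneg : ∀ v, Jneg v 0 = 1) (hJpos : ∀ v, Jpos v 0 = 1)
    (c : Fin l → ℕ) : inversionSum B d q z Jneg Jpos c 0 = 1 := by
  rw [inversionSum, sum_eq_single_of_mem 0 (mem_Iic.mpr le_rfl)
    fun a ha ha0 => absurd (nonpos_iff_eq_zero.mp (mem_Iic.mp ha)) ha0]
  simp [shiftMono_zero, hJneg, hJpos]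

theorem sum_mul_eq_sum_shiftMono_mul_inversionSum (hq : q ≠ 0) (hz : ∀ i, z i ≠ 0)
    (hsym : B.IsSymm) (hdiag : ∀ i, B i i = 2 * d i)
    (hJpos : ∀ v, IsFerm B d q (fun i => z i * q ^ Bv B v i) (Jpos v)) (c m : Fin l → ℕ) :
    ∑ a ∈ Iic m, Jneg (a + c) a * Jpos (a + c) (m - a)
      = ∑ e ∈ Iic m, shiftMono B d q z c e * (pochProd d q (m - e))⁻¹ *
          inversionSum B d q z Jneg Jpos c e := by
  calc _ = ∑ a ∈ Iic m, ∑ b ∈ Iic (m - a), Jneg (a + c) a * (shiftMono B d q z (a + c) b *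
          (pochProd d q (m - a - b))⁻¹ * Jpos (a + c) b) :=
        sum_congr rfl fun a _ => by
          rw [eq_sum_shiftMono_of_isFerm hq (hJpos (a + c)) (m - a), mul_sum]
    _ = ∑ e ∈ Iic m, ∑ a ∈ Iic e, Jneg (a + c) a * (shiftMono B d q z (a + c) (e - a) *
          (pochProd d q (m - a - (e - a)))⁻¹ * Jpos (a + c) (e - a)) :=
        sum_Iic_sum_Iic_tsub m _
    _ = _ := sum_congr rfl fun e _ => by
        rw [inversionSum, mul_sum]
        refine sum_congr rfl fun a ha => ?_
        have hae : a + (e - a) = e := add_tsub_cancel_of_le (mem_Iic.mp ha)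
        have hmono : shiftMono B d q z c a * shiftMono B d q z (a + c) (e - a)
            = shiftMono B d q z c e := by
          rw [add_comm a c, ← shiftMono_add hq hsym hdiag, hae]
        have hne := shiftMono_ne_zero (B := B) (d := d) hq hz c a
        rw [tsub_tsub, hae, ← hmono]
        field_simp

theorem sum_mul_eq_sum_pochProd_inv_mul_inversionSum (hq : q ≠ 0) (hsym : B.IsSymm)
    (hdiag : ∀ i, B i i = 2 * d i)
    (hJneg : ∀ v, IsFerm B d q (fun i => (z i)⁻¹ * q ^ (-Bv B v i + 2 * (d i : ℤ))) (Jneg v))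
    (c m : Fin l → ℕ) :
    ∑ a ∈ Iic m, Jneg (a + c) a * Jpos (a + c) (m - a)
      = ∑ g ∈ Iic m, (pochProd d q g)⁻¹ * inversionSum B d q z Jneg Jpos (c + g) (m - g) := by
  calc _ = ∑ a ∈ Iic m, ∑ b ∈ Iic a, (shiftMono B d q z (a + c - b) b)⁻¹ *
          (pochProd d q (a - b))⁻¹ * Jneg (a + c) b * Jpos (a + c) (m - a) :=
        sum_congr rfl fun a _ => by
          rw [eq_sum_inv_shiftMono_of_isFerm hq hsym hdiag (hJneg (a + c)) le_self_add, sum_mul]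
    _ = ∑ g ∈ Iic m, ∑ x ∈ Iic (m - g), (shiftMono B d q z (g + x + c - x) x)⁻¹ *
          (pochProd d q (g + x - x))⁻¹ * Jneg (g + x + c) x * Jpos (g + x + c) (m - (g + x)) :=
        sum_Iic_sum_Iic m _
    _ = _ := sum_congr rfl fun g _ => by
        rw [inversionSum, mul_sum]
        refine sum_congr rfl fun x _ => ?_
        rw [add_right_comm, add_tsub_cancel_right, add_tsub_cancel_right, ← tsub_tsub,
          add_comm g c, add_comm (c + g) x]
        ring

theorem inversionSum_eq_zero_of_lt (hq : q ≠ 0) (hz : ∀ i, z i ≠ 0)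
    (hgen : ∀ m : Fin l → ℕ, m ≠ 0 → ∀ N : ℤ, (∏ i, z i ^ m i) * q ^ N ≠ 1)
    (hsym : B.IsSymm) (hdiag : ∀ i, B i i = 2 * d i)
    (hJneg : ∀ v, IsFerm B d q (fun i => (z i)⁻¹ * q ^ (-Bv B v i + 2 * (d i : ℤ))) (Jneg v))
    (hJpos : ∀ v, IsFerm B d q (fun i => z i * q ^ Bv B v i) (Jpos v)) {m : Fin l → ℕ}
    (hm : m ≠ 0) (vanish : ∀ c e, e < m → e ≠ 0 → inversionSum B d q z Jneg Jpos c e = 0)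
    (c : Fin l → ℕ) : inversionSum B d q z Jneg Jpos c m = 0 := by
  have sum_zero : ∀ c, inversionSum B d q z Jneg Jpos c 0 = 1 :=
    inversionSum_zero (fun v => (hJneg v).1) (fun v => (hJpos v).1)
  have mem0 : (0 : Fin l → ℕ) ∈ Iic m := mem_Iic.mpr zero_le
  have memm : m ∈ Iic m := mem_Iic.mpr le_rfl
  have hpos : ∑ e ∈ Iic m, shiftMono B d q z c e * (pochProd d q (m - e))⁻¹ *
      inversionSum B d q z Jneg Jpos c e
      = (pochProd d q m)⁻¹ + shiftMono B d q z c m * inversionSum B d q z Jneg Jpos c m := by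
    rw [sum_eq_add_of_mem 0 m mem0 memm (Ne.symm hm) fun e he hne => by
      rw [vanish c e (lt_of_le_of_ne (mem_Iic.mp he) hne.2) hne.1, mul_zero]]
    simp only [shiftMono_zero, tsub_zero, tsub_self, pochProd_zero, sum_zero, inv_one, one_mul,
      mul_one]
  have hneg : ∑ g ∈ Iic m, (pochProd d q g)⁻¹ * inversionSum B d q z Jneg Jpos (c + g) (m - g)
      = inversionSum B d q z Jneg Jpos c m + (pochProd d q m)⁻¹ := by
    rw [sum_eq_add_of_mem 0 m mem0 memm (Ne.symm hm) fun g hg hne => by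
      have hgm := mem_Iic.mp hg
      rw [vanish _ _ (tsub_lt_self_of_le_of_ne_zero hgm hne.1)
        (fun h => hne.2 (le_antisymm hgm (tsub_eq_zero_iff_le.mp h))), mul_zero]]
    simp only [pochProd_zero, tsub_zero, add_zero, tsub_self, sum_zero, inv_one, one_mul, mul_one]
  have hexpand := (sum_mul_eq_sum_shiftMono_mul_inversionSum (Jneg := Jneg) hq hz hsym hdiag
    hJpos c m).symm.trans (sum_mul_eq_sum_pochProd_inv_mul_inversionSum hq hsym hdiag hJneg c m)
  rw [hpos, hneg] at hexpand
  have hfactor : (shiftMono B d q z c m - 1) * inversionSum B d q z Jneg Jpos c m = 0 := by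
    linear_combination hexpand
  exact (mul_eq_zero.mp hfactor).resolve_left (sub_ne_zero.mpr (hgen m hm _))

theorem inversionSum_eq_ite (hq : q ≠ 0) (hz : ∀ i, z i ≠ 0)
    (hgen : ∀ m : Fin l → ℕ, m ≠ 0 → ∀ N : ℤ, (∏ i, z i ^ m i) * q ^ N ≠ 1)
    (hsym : B.IsSymm) (hdiag : ∀ i, B i i = 2 * d i)
    (hJneg : ∀ v, IsFerm B d q (fun i => (z i)⁻¹ * q ^ (-Bv B v i + 2 * (d i : ℤ))) (Jneg v))
    (hJpos : ∀ v, IsFerm B d q (fun i => z i * q ^ Bv B v i) (Jpos v)) (c m : Fin l → ℕ) :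
    inversionSum B d q z Jneg Jpos c m = if m = 0 then 1 else 0 := by
  induction m using WellFoundedLT.induction generalizing c with
  | ind m ih =>
  split_ifs with hm
  · subst hm
    exact inversionSum_zero (fun v => (hJneg v).1) (fun v => (hJpos v).1) c
  · exact inversionSum_eq_zero_of_lt hq hz hgen hsym hdiag hJneg hJpos hm
      (fun c e he he0 => by simpa [he0] using ih e he c) c

end Fermionic

section RationalFunctionField

variable {l : ℕ}

theorem q15_ne_zero : q15 l ≠ 0 := by
  simp [q15, map_eq_zero_iff _ (IsFractionRing.injective _ _), MvPolynomial.X_ne_zero]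

theorem z15_ne_zero (i : Fin l) : z15 l i ≠ 0 := by
  simp [z15, map_eq_zero_iff _ (IsFractionRing.injective _ _), MvPolynomial.X_ne_zero]

theorem prod_z15_pow_mul_q15_zpow_ne_one (m : Fin l → ℕ) (hm : m ≠ 0) (N : ℤ) :
    (∏ i, z15 l i ^ m i) * q15 l ^ N ≠ 1 := by
  -- clear the denominator of `q ^ N`, then specialise `z_i ↦ 0` with `m i ≠ 0`, all else `↦ 1`
  intro h
  obtain ⟨i, hi⟩ : ∃ i, m i ≠ 0 := Function.ne_iff.mp hm
  have hpoly : (∏ j, MvPolynomial.X j.succ ^ m j) * MvPolynomial.X 0 ^ N.toNat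
      = (MvPolynomial.X 0 ^ (-N).toNat : MvPolynomial (Fin (l + 1)) ℚ) := by
    apply IsFractionRing.injective (MvPolynomial (Fin (l + 1)) ℚ) (F15 l)
    rw [← Int.toNat_sub_toNat_neg N, zpow_sub₀ q15_ne_zero, zpow_natCast, zpow_natCast,
      mul_div_assoc', div_eq_one_iff_eq (pow_ne_zero _ q15_ne_zero)] at h
    simp only [map_mul, map_prod, map_pow]
    exact h
  have := congrArg (MvPolynomial.eval fun j => if j = i.succ then (0 : ℚ) else 1) hpoly
  simp [hi, (Fin.succ_ne_zero i).symm] at this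

end RationalFunctionField

theorem stmt_15_general (l : ℕ) (B : Matrix (Fin l) (Fin l) ℤ) (d : Fin l → ℕ)
    (hsym : B.IsSymm) (hdiag : ∀ i, B i i = 2 * d i)
    -- for each a, J in the substituted variables z_i⁻¹ q^{−(Ba)_i + 2 d_i}
    (Jneg : (Fin l → ℕ) → (Fin l → ℕ) → F15 l)
    (hJneg : ∀ a, IsFerm B d (q15 l)
      (fun i => (z15 l i)⁻¹ * q15 l ^ (-(Bv B a i) + 2 * (d i : ℤ))) (Jneg a))
    -- for each a, J in the substituted variables z_i q^{(Ba)_i}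
    (Jpos : (Fin l → ℕ) → (Fin l → ℕ) → F15 l)
    (hJpos : ∀ a, IsFerm B d (q15 l)
      (fun i => z15 l i * q15 l ^ (Bv B a i)) (Jpos a)) :
    ∀ m : Fin l → ℕ,
      ∑ a ∈ Finset.Iic m,
        ((∏ i, z15 l i ^ a i) * q15 l ^ (W15 B d a))⁻¹ *
          Jneg a a * Jpos a (m - a)
      = if m = 0 then 1 else 0 := by
  intro m
  rw [← Fermionic.inversionSum_eq_ite q15_ne_zero z15_ne_zero prod_z15_pow_mul_q15_zpow_ne_one
    hsym hdiag hJneg hJpos 0 m]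
  refine sum_congr rfl fun a _ => ?_
  rw [Fermionic.shiftMono, Fermionic.pairing_zero_right, zero_add, add_zero]

theorem stmt_15 (l : ℕ) (hl : 1 ≤ l) (B : Matrix (Fin l) (Fin l) ℤ) (d : Fin l → ℕ)
    (hsym : B.IsSymm) (hdpos : ∀ i, 0 < d i) (hdiag : ∀ i, B i i = 2 * d i)
    (hoff : ∀ i j, i ≠ j → B i j ≤ 0) (hdvd : ∀ i j, (d i : ℤ) ∣ B i j)
    (hposdef : ∀ x : Fin l → ℤ, x ≠ 0 → 0 < ∑ i, ∑ j, B i j * x i * x j)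
    -- for each a, J in the substituted variables z_i⁻¹ q^{−(Ba)_i + 2 d_i}
    (Jneg : (Fin l → ℕ) → (Fin l → ℕ) → F15 l)
    (hJneg : ∀ a, IsFerm B d (q15 l)
      (fun i => (z15 l i)⁻¹ * q15 l ^ (-(Bv B a i) + 2 * (d i : ℤ))) (Jneg a))
    -- for each a, J in the substituted variables z_i q^{(Ba)_i}
    (Jpos : (Fin l → ℕ) → (Fin l → ℕ) → F15 l)
    (hJpos : ∀ a, IsFerm B d (q15 l)
      (fun i => z15 l i * q15 l ^ (Bv B a i)) (Jpos a)) :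
    ∀ m : Fin l → ℕ,
      ∑ a ∈ Finset.Iic m,
        ((∏ i, z15 l i ^ a i) * q15 l ^ (W15 B d a))⁻¹ *
          Jneg a a * Jpos a (m - a)
      = if m = 0 then 1 else 0 :=
  stmt_15_general l B d hsym hdiag Jneg hJneg Jpos hJpos
end
end
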